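/- (Murphy's lemma) Suppose v̂ is a row standard μ-tableau, s is a standard μ-tableau, and u, w ∈ S_n satisfy: u ≤ w in Bruhat order, v̂ ⊵ s, v̂u is row standard, s ⊳ sw, and ℓ(d(s)w) = ℓ(d(s)) + ℓ(w). Then v̂u ⊵ sw. -/

import Mathlib

open scoped Classical

noncomputable section

namespace SpechtInduction

/-- A node `(l, r, c)`: component `l`, row `r`, column `c` (all 0-indexed). -/
abbrev Node : Type := ℕ × ℕ × ℕ

/-- A multicomposition of `n` with `ℓ` components, each a list of row lengths. -/
structure Multicomp (ℓ n : ℕ) where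
  parts : List (List ℕ)
  len_eq : parts.length = ℓ
  size_eq : (parts.map List.sum).sum = n

namespace Multicomp

variable {ℓ n : ℕ}

def rowLen (μ : Multicomp ℓ n) (l r : ℕ) : ℕ := (μ.parts.getD l []).getD r 0

def mem (μ : Multicomp ℓ n) (x : Node) : Prop := x.2.2 < μ.rowLen x.1 x.2.1

def compSize (μ : Multicomp ℓ n) (l : ℕ) : ℕ := (μ.parts.getD l []).sum

/-- The partial sums appearing in the dominance order. -/
def psum (μ : Multicomp ℓ n) (l i : ℕ) : ℕ :=
  (∑ k ∈ Finset.range l, μ.compSize k) + ∑ j ∈ Finset.range i, μ.rowLen l j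

/-- The dominance order `lam ⊵ mu` on multicompositions. -/
def Dominates (lam mu : Multicomp ℓ n) : Prop := ∀ l i, mu.psum l i ≤ lam.psum l i

/-- Each component is a (weakly decreasing) partition. -/
def IsMultipartition (μ : Multicomp ℓ n) : Prop := ∀ l r, μ.rowLen l (r+1) ≤ μ.rowLen l r

end Multicomp

/-- A `μ`-tableau, recorded by the position function sending each entry `k ∈ {1,…,n}`
to the node it occupies: a bijection onto the diagram of `μ`. -/
def IsTableau {ℓ n : ℕ} (μ : Multicomp ℓ n) (pos : ℕ → Node) : Prop :=
  (∀ j k, 1 ≤ j → j ≤ n → 1 ≤ k → k ≤ n → pos j = pos k → j = k) ∧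
  (∀ k, 1 ≤ k → k ≤ n → μ.mem (pos k)) ∧
  (∀ x, μ.mem x → ∃ k, 1 ≤ k ∧ k ≤ n ∧ pos k = x)

/-- Row standard: entries increase along the rows. -/
def RowStandard {ℓ n : ℕ} (μ : Multicomp ℓ n) (pos : ℕ → Node) : Prop :=
  IsTableau μ pos ∧ ∀ j k, 1 ≤ j → j ≤ n → 1 ≤ k → k ≤ n →
    (pos j).1 = (pos k).1 → (pos j).2.1 = (pos k).2.1 → (pos j).2.2 < (pos k).2.2 → j < k

/-- Column standard (= conjugate is row standard): entries increase down the columns. -/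
def ColStandard {ℓ n : ℕ} (μ : Multicomp ℓ n) (pos : ℕ → Node) : Prop :=
  IsTableau μ pos ∧ ∀ j k, 1 ≤ j → j ≤ n → 1 ≤ k → k ≤ n →
    (pos j).1 = (pos k).1 → (pos j).2.2 = (pos k).2.2 → (pos j).2.1 < (pos k).2.1 → j < k

/-- Standard tableau: the tableau and its conjugate are both row standard. -/
def StandardTab {ℓ n : ℕ} (μ : Multicomp ℓ n) (pos : ℕ → Node) : Prop :=
  RowStandard μ pos ∧ ColStandard μ pos

/-- Number of entries `≤ m` lying in row `(l,r)`. -/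
def cnt (pos : ℕ → Node) (m l r : ℕ) : ℕ :=
  ((Finset.Icc 1 m).filter fun k => (pos k).1 = l ∧ (pos k).2.1 = r).card

/-- Number of entries `≤ m` lying in column `c` of component `l`. -/
def ccnt (pos : ℕ → Node) (m l c : ℕ) : ℕ :=
  ((Finset.Icc 1 m).filter fun k => (pos k).1 = l ∧ (pos k).2.2 = c).card

/-- Number of entries `≤ m` lying in component `l`. -/
def compcnt (pos : ℕ → Node) (m l : ℕ) : ℕ :=
  ((Finset.Icc 1 m).filter fun k => (pos k).1 = l).card

/-- Dominance partial sums of the shape `Shape(t_m)` of the subtableau on entries `1,…,m`. -/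
def tabPsum (pos : ℕ → Node) (m l i : ℕ) : ℕ :=
  (∑ k ∈ Finset.range l, compcnt pos m k) + ∑ j ∈ Finset.range i, cnt pos m l j

/-- Dominance order `s ⊵ t` on tableaux with `n` entries:
`Shape(s_m) ⊵ Shape(t_m)` for all `1 ≤ m ≤ n`. -/
def TabDominates (n : ℕ) (s t : ℕ → Node) : Prop :=
  ∀ m l i, 1 ≤ m → m ≤ n → tabPsum t m l i ≤ tabPsum s m l i

/-- Dominance partial sums of the shape of the *conjugate* of the subtableau `pos_m`,
for a tableau with `ℓ` components (components get reversed, rows and columns swapped). -/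
def conjPsum (ℓ : ℕ) (pos : ℕ → Node) (m l i : ℕ) : ℕ :=
  (∑ k ∈ Finset.range l, compcnt pos m (ℓ - 1 - k)) +
    ∑ j ∈ Finset.range i, ccnt pos m (ℓ - 1 - l) j

/-- `t' ⊵ s'`: the conjugate of `t` dominates the conjugate of `s`. -/
def ConjTabDominates (ℓ n : ℕ) (t s : ℕ → Node) : Prop :=
  ∀ m l i, 1 ≤ m → m ≤ n → conjPsum ℓ s m l i ≤ conjPsum ℓ t m l i

/-- `u' ⊵ t`: the conjugate of `u` dominates `t`. -/
def ConjDomTab (ℓ n : ℕ) (u t : ℕ → Node) : Prop :=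
  ∀ m l i, 1 ≤ m → m ≤ n → tabPsum t m l i ≤ conjPsum ℓ u m l i

/-- Lexicographic (row reading) order on nodes: by component, then row, then column. -/
def nodeLex (x y : Node) : Prop :=
  x.1 < y.1 ∨ (x.1 = y.1 ∧ (x.2.1 < y.2.1 ∨ (x.2.1 = y.2.1 ∧ x.2.2 < y.2.2)))

/-- `pos` is the row-reading tableau `t^μ` of `μ`: entries filled in order along
the rows of each component in turn. -/
def IsRowReading {ℓ n : ℕ} (μ : Multicomp ℓ n) (pos : ℕ → Node) : Prop :=
  IsTableau μ pos ∧ ∀ j k, 1 ≤ j → j ≤ n → 1 ≤ k → k ≤ n → (j < k ↔ nodeLex (pos j) (pos k))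

/-- Column reading order on nodes: components from last to first, then columns, then rows. -/
def nodeColLex (x y : Node) : Prop :=
  y.1 < x.1 ∨ (x.1 = y.1 ∧ (x.2.2 < y.2.2 ∨ (x.2.2 = y.2.2 ∧ x.2.1 < y.2.1)))

/-- `pos` is the column-reading tableau `t_μ` of `μ`: entries filled in order down the
columns, from the last component to the first. -/
def IsColReading {ℓ n : ℕ} (μ : Multicomp ℓ n) (pos : ℕ → Node) : Prop :=
  IsTableau μ pos ∧ ∀ j k, 1 ≤ j → j ≤ n → 1 ≤ k → k ≤ n → (j < k ↔ nodeColLex (pos j) (pos k))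

/-- `w` lies in the "symmetric group on `{a,…,b}`": it fixes every point outside `[a,b]`. -/
def FixesOutside (w : Equiv.Perm ℕ) (a b : ℕ) : Prop := ∀ k, k < a ∨ b < k → w k = k

/-- Coxeter length of a permutation of `{1,…,n}`, as the number of inversions. -/
def permLength (n : ℕ) (w : Equiv.Perm ℕ) : ℕ :=
  (((Finset.Icc 1 n) ×ˢ (Finset.Icc 1 n)).filter fun p => p.1 < p.2 ∧ w p.2 < w p.1).card

/-- Right action of a permutation on a tableau (position function). -/
def actTab (pos : ℕ → Node) (w : Equiv.Perm ℕ) : ℕ → Node := fun k => pos (w k)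

/-- `d` is the permutation `d(pos)` with `pos = tpos · d`, `tpos` the reference tableau. -/
def IsDPerm (n : ℕ) (tpos pos : ℕ → Node) (d : Equiv.Perm ℕ) : Prop :=
  FixesOutside d 1 n ∧ ∀ k, 1 ≤ k → k ≤ n → pos k = tpos (d k)

/-- The simple transposition `s_i = (i, i+1)`. -/
def swapP (i : ℕ) : Equiv.Perm ℕ := Equiv.swap i (i + 1)

/-- The product `s_{i₁} ⋯ s_{i_k}` of a word in the Coxeter generators. -/
def wordProd (L : List ℕ) : Equiv.Perm ℕ := (L.map swapP).prod

/-- A reduced word for its product, using generators `s_1,…,s_{n-1}`. -/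
def IsReducedWord (n : ℕ) (L : List ℕ) : Prop :=
  (∀ i ∈ L, 1 ≤ i ∧ i < n) ∧ L.length = permLength n (wordProd L)

/-- Bruhat order on `S_n`: some reduced expression of `u` is a subexpression of some
reduced expression of `w`. -/
def BruhatLE (n : ℕ) (u w : Equiv.Perm ℕ) : Prop :=
  ∃ ww uw : List ℕ, IsReducedWord n ww ∧ wordProd ww = w ∧
    uw.Sublist ww ∧ IsReducedWord n uw ∧ wordProd uw = u

/-- Membership in the Young subgroup `S_μ`: `w` fixes `[1,n]` setwise, preserving each
row of the reference row-reading tableau `tpos = t^μ`. -/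
def YoungMem (n : ℕ) (tpos : ℕ → Node) (w : Equiv.Perm ℕ) : Prop :=
  FixesOutside w 1 n ∧ ∀ k, 1 ≤ k → k ≤ n →
    (tpos (w k)).1 = (tpos k).1 ∧ (tpos (w k)).2.1 = (tpos k).2.1

/-- `accSize μ k = |μ^(1)| + ⋯ + |μ^(k)|`. -/
def accSize {ℓ n : ℕ} (μ : Multicomp ℓ n) (k : ℕ) : ℕ := ∑ j ∈ Finset.range k, μ.compSize j

/-- The content of a node, with `ξinv` a fixed inverse of `ξ`:
`ξ^(c-r) Q_l` if `ξ ≠ 1` and `c - r + Q_l` if `ξ = 1`. -/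
def contOfR {R : Type*} [CommRing R] (ξ ξinv : R) (Q : ℕ → R) (x : Node) : R :=
  if ξ = 1 then ((x.2.2 : R) - (x.2.1 : R)) + Q (x.1 + 1)
  else ξ ^ x.2.2 * ξinv ^ x.2.1 * Q (x.1 + 1)

/-- The set of contents `cont_s(k)` as `s` ranges over all standard tableaux of
multipartitions of `n`. -/
def ContSet (ℓ n : ℕ) {R : Type*} [CommRing R] (ξ ξinv : R) (Q : ℕ → R) (k : ℕ) : Set R :=
  {c | ∃ (μ : Multicomp ℓ n) (pos : ℕ → Node), μ.IsMultipartition ∧ StandardTab μ pos ∧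
        c = contOfR ξ ξinv Q (pos k)}

/-- The cyclotomic Hecke algebra of type `G(ℓ,1,n)`: an `R`-algebra `A` equipped with
generators satisfying the defining relations, together with the elements `T_w` and the
`*` anti-involution fixing the generators. -/
structure Hecke (R : Type*) [CommRing R] (A : Type*) [Ring A] [Algebra R A]
    (n ℓ : ℕ) (ξ : R) (Q : ℕ → R) where
  L : ℕ → A
  T : ℕ → A
  Tw : Equiv.Perm ℕ → A
  star : A →ₗ[R] A
  cyclotomic : ((List.range ℓ).map fun k => L 1 - algebraMap R A (Q (k + 1))).prod = 0
  LL : ∀ r t, L r * L t = L t * L r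
  quad : ∀ r, 1 ≤ r → r < n → (T r + 1) * (T r - algebraMap R A ξ) = 0
  TL : ∀ r, 1 ≤ r → r < n →
      T r * L r + (if ξ = 1 then 1 else 0) = L (r + 1) * (T r - algebraMap R A ξ + 1)
  braid : ∀ s, 1 ≤ s → s + 1 < n → T s * T (s + 1) * T s = T (s + 1) * T s * T (s + 1)
  TLfar : ∀ r t, 1 ≤ r → r < n → t ≠ r → t ≠ r + 1 → T r * L t = L t * T r
  TTfar : ∀ r s, 1 ≤ r → r < n → 1 ≤ s → s < n → (r + 1 < s ∨ s + 1 < r) →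
      T r * T s = T s * T r
  Tw_one : Tw 1 = 1
  Tw_mul : ∀ w i, 1 ≤ i → i < n → permLength n w < permLength n (w * swapP i) →
      Tw (w * swapP i) = Tw w * T i
  star_mul : ∀ a b, star (a * b) = star b * star a
  star_one : star 1 = 1
  star_L : ∀ r, star (L r) = L r
  star_T : ∀ r, star (T r) = T r

namespace Hecke

variable {R : Type*} [CommRing R] {A : Type*} [Ring A] [Algebra R A]
  {n ℓ : ℕ} {ξ : R} {Q : ℕ → R}

/-- `x_μ = Σ_{w ∈ S_μ} T_w`, where `tpos = t^μ`. -/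
def xElt (h : Hecke R A n ℓ ξ Q) (tpos : ℕ → Node) : A :=
  ∑ᶠ (w : Equiv.Perm ℕ) (_ : YoungMem n tpos w), h.Tw w

/-- `y_μ = Σ_{w ∈ S_μ} (-ξ)^{-ℓ(w)} T_w`. -/
def yElt (h : Hecke R A n ℓ ξ Q) (ξinv : R) (tpos : ℕ → Node) : A :=
  ∑ᶠ (w : Equiv.Perm ℕ) (_ : YoungMem n tpos w), ((-ξinv) ^ permLength n w) • h.Tw w

/-- `u⁺_μ = Π_{k=2}^{ℓ} Π_{m=1}^{|μ^(1)|+⋯+|μ^(k-1)|} (L_m - Q_k)`. -/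
def uPlus (h : Hecke R A n ℓ ξ Q) (μ : Multicomp ℓ n) : A :=
  ((List.range' 2 (ℓ - 1)).map fun k =>
    ((List.range' 1 (accSize μ (k - 1))).map fun m => h.L m - algebraMap R A (Q k)).prod).prod

/-- `u⁻_μ = Π_{k=1}^{ℓ-1} Π_{m=1}^{|μ^(1)|+⋯+|μ^(ℓ-k+1)|} (L_m - Q_k)`. -/
def uMinus (h : Hecke R A n ℓ ξ Q) (μ : Multicomp ℓ n) : A :=
  ((List.range' 1 (ℓ - 1)).map fun k =>
    ((List.range' 1 (accSize μ (ℓ - k + 1))).map fun m => h.L m - algebraMap R A (Q k)).prod).prod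

/-- `m_μ = u⁺_μ x_μ` (here `tpos = t^μ`). -/
def mmu (h : Hecke R A n ℓ ξ Q) (μ : Multicomp ℓ n) (tpos : ℕ → Node) : A :=
  h.uPlus μ * h.xElt tpos

/-- `n_μ = u⁻_μ y_μ`. -/
def nmu (h : Hecke R A n ℓ ξ Q) (ξinv : R) (μ : Multicomp ℓ n) (tpos : ℕ → Node) : A :=
  h.uMinus μ * h.yElt ξinv tpos

/-- The Murphy basis element `m_{st} = T_{d(s)}^* m_μ T_{d(t)}`. -/
def mst (h : Hecke R A n ℓ ξ Q) (μ : Multicomp ℓ n) (tpos : ℕ → Node)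
    (ds dt : Equiv.Perm ℕ) : A :=
  h.star (h.Tw ds) * h.mmu μ tpos * h.Tw dt

/-- The dual Murphy basis element `n_{st} = T_{d(s)}^* n_μ T_{d(t)}`. -/
def nst (h : Hecke R A n ℓ ξ Q) (ξinv : R) (μ : Multicomp ℓ n) (tpos : ℕ → Node)
    (ds dt : Equiv.Perm ℕ) : A :=
  h.star (h.Tw ds) * h.nmu ξinv μ tpos * h.Tw dt

end Hecke

/-- The element `F_t = Π_{k=1}^n Π_{c ∈ contents, c ≠ cont_t(k)}
`(L_k - c)/(cont_t(k) - c)` of the split semisimple cyclotomic Hecke algebra. -/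
def Ftab {K : Type*} [Field K] {A : Type*} [Ring A] [Algebra K A] {n ℓ : ℕ} {ξ : K}
    {Q : ℕ → K} (h : Hecke K A n ℓ ξ Q)
    (hfin : ∀ k, (ContSet ℓ n ξ ξ⁻¹ Q k).Finite) (t : ℕ → Node) : A :=
  ((List.range n).map fun k0 =>
    Finset.noncommProd
      (((hfin (k0 + 1)).toFinset).filter fun c => c ≠ contOfR ξ ξ⁻¹ Q (t (k0 + 1)))
      (fun c => algebraMap K A ((contOfR ξ ξ⁻¹ Q (t (k0 + 1)) - c)⁻¹) *
        (h.L (k0 + 1) - algebraMap K A c))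
      (by
        intro a _ b _ _
        have hc : ∀ (r : K) (z : A), Commute (algebraMap K A r) z := fun r z =>
          Algebra.commutes r z
        have c1 : Commute (h.L (k0 + 1) - algebraMap K A a)
            (h.L (k0 + 1) - algebraMap K A b) :=
          Commute.sub_left ((Commute.refl (h.L (k0 + 1))).sub_right ((hc b _).symm))
            (hc a _)
        exact Commute.mul_left (hc _ _)
          (Commute.mul_right ((hc _ _).symm) c1)
        )).prod

/-- The seminormal basis element `f_{st} = F_s m_{st} F_t`.  Here `tpos = t^μ` and
`ds, dt` are the permutations with `s = t^μ d(s)`, `t = t^μ d(t)`. -/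
def fElt {K : Type*} [Field K] {A : Type*} [Ring A] [Algebra K A] {n ℓ : ℕ} {ξ : K}
    {Q : ℕ → K} (h : Hecke K A n ℓ ξ Q)
    (hfin : ∀ k, (ContSet ℓ n ξ ξ⁻¹ Q k).Finite) (μ : Multicomp ℓ n)
    (tpos spos tpos' : ℕ → Node) (ds dt : Equiv.Perm ℕ) : A :=
  Ftab h hfin spos * h.mst μ tpos ds dt * Ftab h hfin tpos'

/-- Semisimplicity of the cyclotomic Hecke algebra, in the equivalent combinatorial form:
contents separate standard tableaux. -/
def SeparatedContents (ℓ n : ℕ) {R : Type*} [CommRing R] (ξ ξinv : R) (Q : ℕ → R) : Prop :=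
  ∀ (μ ν : Multicomp ℓ n) (s t : ℕ → Node), μ.IsMultipartition → ν.IsMultipartition →
    StandardTab μ s → StandardTab ν t →
    (∀ k, 1 ≤ k → k ≤ n → contOfR ξ ξinv Q (s k) = contOfR ξ ξinv Q (t k)) →
    ∀ k, 1 ≤ k → k ≤ n → s k = t k

/-! ## Residues, degrees and the quiver combinatorics -/

/-- The residue of a node: `c - r + κ_l (mod e)`. -/
def resOf (e : ℕ) (κ : ℕ → ℤ) (x : Node) : ZMod e :=
  (((x.2.2 : ℤ) - (x.2.1 : ℤ) + κ x.1 : ℤ) : ZMod e)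

/-- The entries of the Cartan matrix of the quiver `Γ_e`. -/
def cartanInt (e : ℕ) (i j : ZMod e) : ℤ :=
  (if i = j then 2 else 0) + (if j = i + 1 ∧ i ≠ j then -1 else 0) +
    (if j = i - 1 ∧ i ≠ j then -1 else 0)

/-- `x` is an addable node of the shape with row lengths `f` (with `ℓ` components). -/
def AddableNode (f : ℕ → ℕ → ℕ) (ℓ : ℕ) (x : Node) : Prop :=
  x.1 < ℓ ∧ x.2.2 = f x.1 x.2.1 ∧ (x.2.1 = 0 ∨ x.2.2 < f x.1 (x.2.1 - 1))

/-- `x` is a removable node of the shape with row lengths `f`. -/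
def RemovableNode (f : ℕ → ℕ → ℕ) (ℓ : ℕ) (x : Node) : Prop :=
  x.1 < ℓ ∧ x.2.2 + 1 = f x.1 x.2.1 ∧ f x.1 (x.2.1 + 1) ≤ x.2.2

/-- `x` is strictly below `y`. -/
def Below (x y : Node) : Prop := y.1 < x.1 ∨ (x.1 = y.1 ∧ y.2.1 < x.2.1)

/-- A finite region containing all relevant nodes. -/
def nodeRegion (ℓ n : ℕ) : Finset Node :=
  (Finset.range ℓ) ×ˢ (Finset.range (n + 1)) ×ˢ (Finset.range (n + 1))

/-- `d_A(μ) = #{addable i-nodes below A} - #{removable i-nodes below A}` (same residue). -/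
def dBelow (e ℓ n : ℕ) (κ : ℕ → ℤ) (f : ℕ → ℕ → ℕ) (A : Node) : ℤ :=
  ((((nodeRegion ℓ n).filter fun x =>
      AddableNode f ℓ x ∧ resOf e κ x = resOf e κ A ∧ Below x A).card : ℤ)) -
  (((nodeRegion ℓ n).filter fun x =>
      RemovableNode f ℓ x ∧ resOf e κ x = resOf e κ A ∧ Below x A).card : ℤ)

/-- `d^A(μ)`: the same with "above" in place of "below". -/
def dAbove (e ℓ n : ℕ) (κ : ℕ → ℤ) (f : ℕ → ℕ → ℕ) (A : Node) : ℤ :=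
  ((((nodeRegion ℓ n).filter fun x =>
      AddableNode f ℓ x ∧ resOf e κ x = resOf e κ A ∧ Below A x).card : ℤ)) -
  (((nodeRegion ℓ n).filter fun x =>
      RemovableNode f ℓ x ∧ resOf e κ x = resOf e κ A ∧ Below A x).card : ℤ)

/-- The shape (row-length function) of the subtableau of `pos` on entries `1,…,m`. -/
def subShape (pos : ℕ → Node) (m : ℕ) : ℕ → ℕ → ℕ := fun l r => cnt pos m l r

/-- The Brundan–Kleshchev–Wang degree of a standard tableau. -/
def degTab (e ℓ n : ℕ) (κ : ℕ → ℤ) (pos : ℕ → Node) : ℤ :=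
  ∑ k ∈ Finset.range n, dBelow e ℓ n κ (subShape pos k) (pos (k + 1))

/-- The codegree of a standard tableau. -/
def codegTab (e ℓ n : ℕ) (κ : ℕ → ℤ) (pos : ℕ → Node) : ℤ :=
  ∑ k ∈ Finset.range n, dAbove e ℓ n κ (subShape pos k) (pos (k + 1))

/-- `(Λ, β)` where `β = Σ_k α_{res(k)}` for the residue sequence of `pos`. -/
def lamBeta (e ℓ n : ℕ) (κ : ℕ → ℤ) (pos : ℕ → Node) : ℤ :=
  ∑ k ∈ Finset.range n,
    (((Finset.range ℓ).filter fun l => ((κ l : ZMod e)) = resOf e κ (pos (k + 1))).card : ℤ)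

/-- `(β, β)` for `β = Σ_k α_{res(k)}`. -/
def betaBeta (e ℓ n : ℕ) (κ : ℕ → ℤ) (pos : ℕ → Node) : ℤ :=
  ∑ j ∈ Finset.range n, ∑ k ∈ Finset.range n,
    cartanInt e (resOf e κ (pos (j + 1))) (resOf e κ (pos (k + 1)))

/-- The defect `(Λ, β) - (β, β)/2` of the block containing `pos`. -/
def defectOf (e ℓ n : ℕ) (κ : ℕ → ℤ) (pos : ℕ → Node) : ℤ :=
  lamBeta e ℓ n κ pos - betaBeta e ℓ n κ pos / 2

/-- The conjugate of a node (for a shape with `ℓ` components). -/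
def conjNode (ℓ : ℕ) (x : Node) : Node := (ℓ - 1 - x.1, x.2.2, x.2.1)

/-- The sequence obtained by swapping places `s` and `s+1`. -/
def swapSeq {e : ℕ} (s : ℕ) (i : ℕ → ZMod e) : ℕ → ZMod e :=
  fun k => if k = s then i (s + 1) else if k = s + 1 then i s else i k

/-- The cyclotomic quiver Hecke (KLR) algebra `R_n^Λ` of type `Γ_e`: an `R`-algebra `A`
with generators satisfying the KLR relations, together with its grading and the graded
anti-involution fixing the generators.  Idempotents are indexed by residue sequences
`i : ℕ → ZMod e` (only the values at `1,…,n` matter); `Λm j = (Λ, α_j)`. -/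
structure KLR (R : Type*) [CommRing R] (A : Type*) [Ring A] [Algebra R A]
    (e n : ℕ) (Λm : ZMod e → ℕ) where
  E : (ℕ → ZMod e) → A
  Y : ℕ → A
  Psi : ℕ → A
  star : A →ₗ[R] A
  GS : ℤ → Submodule R A
  E_ext : ∀ i j : ℕ → ZMod e, (∀ k, 1 ≤ k → k ≤ n → i k = j k) → E i = E j
  orth : ∀ i j : ℕ → ZMod e,
      E i * E j = if (∀ k, 1 ≤ k → k ≤ n → i k = j k) then E i else 0
  sumE : ∀ S : Finset (ℕ → ZMod e),
      (∀ j ∈ S, ∀ j' ∈ S, (∀ k, 1 ≤ k → k ≤ n → j k = j' k) → j = j') →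
      (∀ i : ℕ → ZMod e, ∃ j ∈ S, ∀ k, 1 ≤ k → k ≤ n → i k = j k) →
      ∑ j ∈ S, E j = 1
  cyc : ∀ i : ℕ → ZMod e, Y 1 ^ (Λm (i 1)) * E i = 0
  YE : ∀ (i : ℕ → ZMod e) (r : ℕ), Y r * E i = E i * Y r
  PsiE : ∀ (i : ℕ → ZMod e) (s : ℕ), Psi s * E i = E (swapSeq s i) * Psi s
  YY : ∀ r s, Y r * Y s = Y s * Y r
  PsiY : ∀ r s, 1 ≤ s → s < n → r ≠ s → r ≠ s + 1 → Psi s * Y r = Y r * Psi s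
  PsiPsi : ∀ r s, r + 1 < s ∨ s + 1 < r → Psi r * Psi s = Psi s * Psi r
  PsiYE : ∀ (i : ℕ → ZMod e) (r : ℕ), 1 ≤ r → r < n →
      Psi r * Y (r + 1) * E i =
        (if i r = i (r + 1) then Y r * Psi r + 1 else Y r * Psi r) * E i
  YPsiE : ∀ (i : ℕ → ZMod e) (r : ℕ), 1 ≤ r → r < n →
      Y (r + 1) * Psi r * E i =
        (if i r = i (r + 1) then Psi r * Y r + 1 else Psi r * Y r) * E i
  PsiSq : ∀ (i : ℕ → ZMod e) (r : ℕ), 1 ≤ r → r < n →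
      Psi r * Psi r * E i =
        if i r = i (r + 1) then 0
        else if i (r + 1) ≠ i r + 1 ∧ i (r + 1) ≠ i r - 1 then E i
        else if e ≠ 2 ∧ i (r + 1) = i r + 1 then (Y (r + 1) - Y r) * E i
        else if e ≠ 2 ∧ i (r + 1) = i r - 1 then (Y r - Y (r + 1)) * E i
        else (Y (r + 1) - Y r) * (Y r - Y (r + 1)) * E i
  braid : ∀ (i : ℕ → ZMod e) (r : ℕ), 1 ≤ r → r + 1 < n →
      Psi r * Psi (r + 1) * Psi r * E i =
        (if e ≠ 2 ∧ i (r + 2) = i r ∧ i (r + 1) = i r + 1 then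
            Psi (r + 1) * Psi r * Psi (r + 1) + 1
         else if e ≠ 2 ∧ i (r + 2) = i r ∧ i r = i (r + 1) + 1 then
            Psi (r + 1) * Psi r * Psi (r + 1) - 1
         else if e = 2 ∧ i (r + 2) = i r ∧ i r = i (r + 1) + 1 then
            Psi (r + 1) * Psi r * Psi (r + 1) + Y r - Y (r + 1) - Y (r + 1) + Y (r + 2)
         else Psi (r + 1) * Psi r * Psi (r + 1)) * E i
  star_mul : ∀ a b, star (a * b) = star b * star a
  star_E : ∀ i, star (E i) = E i
  star_Y : ∀ r, star (Y r) = Y r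
  star_Psi : ∀ s, star (Psi s) = Psi s
  E_mem : ∀ i, E i ∈ GS 0
  Y_mem : ∀ r, Y r ∈ GS 2
  Psi_mem : ∀ (i : ℕ → ZMod e) (s : ℕ), Psi s * E i ∈ GS (-(cartanInt e (i s) (i (s + 1))))
  GS_mul : ∀ (d d' : ℤ) (a b : A), a ∈ GS d → b ∈ GS d' → a * b ∈ GS (d + d')

namespace KLR

variable {R : Type*} [CommRing R] {A : Type*} [Ring A] [Algebra R A]
  {e n : ℕ} {Λm : ZMod e → ℕ}

/-- `ψ_{i₁} ⋯ ψ_{i_k}` for a (reduced) word. -/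
def psiWord (Kk : KLR R A e n Λm) (L : List ℕ) : A := (L.map Kk.Psi).prod

/-- The residue sequence of a tableau. -/
def resSeq (e : ℕ) (κ : ℕ → ℤ) (pos : ℕ → Node) : ℕ → ZMod e := fun k => resOf e κ (pos k)

/-- The monomial `y_μ = y_1^{d_1} ⋯ y_n^{d_n}` of Hu–Mathas, where `tpos = t^μ` and
`d_m = d_{A_m}(μ_m)`. -/
def yMu (Kk : KLR R A e n Λm) (ℓ : ℕ) (κ : ℕ → ℤ) (tpos : ℕ → Node) : A :=
  ((List.range n).map fun m0 =>
    Kk.Y (m0 + 1) ^ (dBelow e ℓ n κ (subShape tpos m0) (tpos (m0 + 1))).toNat).prod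

/-- The monomial `y'_μ = y_1^{d'_1} ⋯ y_n^{d'_n}`, computed from `t_{μ'}`, the conjugate
of `tpos = t^μ`, with `d'_m = d^{A'_m}(μ'_m)`. -/
def yMu' (Kk : KLR R A e n Λm) (ℓ : ℕ) (κ : ℕ → ℤ) (tpos : ℕ → Node) : A :=
  ((List.range n).map fun m0 =>
    Kk.Y (m0 + 1) ^
      (dAbove e ℓ n κ (subShape (fun k => conjNode ℓ (tpos k)) m0)
        (conjNode ℓ (tpos (m0 + 1)))).toNat).prod

/-- The Hu–Mathas basis element `ψ_{st} = ψ_{d(s)}^⋆ e_μ y_μ ψ_{d(t)}`, where `tpos = t^μ`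
and `ws, wt` are the chosen reduced words for `d(s), d(t)`. -/
def psiST (Kk : KLR R A e n Λm) (ℓ : ℕ) (κ : ℕ → ℤ) (tpos : ℕ → Node)
    (ws wt : List ℕ) : A :=
  Kk.star (Kk.psiWord ws) * Kk.E (resSeq e κ tpos) * Kk.yMu ℓ κ tpos * Kk.psiWord wt

/-- The dual basis element `ψ'_{st} = ψ_{d(s)}^⋆ e'_μ y'_μ ψ_{d(t)}`, where
`e'_μ = e(res(t_{μ'}))` and `t_{μ'}` is the conjugate of `tpos = t^μ`. -/
def psiST' (Kk : KLR R A e n Λm) (ℓ : ℕ) (κ : ℕ → ℤ) (tpos : ℕ → Node)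
    (ws wt : List ℕ) : A :=
  Kk.star (Kk.psiWord ws) * Kk.E (resSeq e κ fun k => conjNode ℓ (tpos k)) *
    Kk.yMu' ℓ κ tpos * Kk.psiWord wt

end KLR

/-!
Write `w = s_{c_1} ⋯ s_{c_k}` as a reduced word and `u` as a subword of it, and induct along
the word. Because `ℓ(d(s)w) = ℓ(d(s)) + ℓ(w)`, every letter `c` raises the length of the
product `x = d(s) s_{c_1} ⋯` so far, i.e. `x c < x (c + 1)`; since `s = t^μ d(s)` and `t^μ`
is the row reading tableau, entry `c` of the current tableau then sits in a row weakly above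
that of entry `c + 1`. In that situation, swapping `c` and `c + 1` in the dominated tableau
preserves dominance, whether or not the dominating tableau is swapped too.
-/

def PrecedesRow (x : Node) (l r : ℕ) : Prop := x.1 < l ∨ (x.1 = l ∧ x.2.1 < r)

lemma tabPsum_eq_sum (pos : ℕ → Node) (m l r : ℕ) :
    tabPsum pos m l r = ∑ k ∈ Finset.Icc 1 m, if PrecedesRow (pos k) l r then 1 else 0 := by
  simp only [tabPsum, compcnt, cnt, Finset.card_filter]
  rw [Finset.sum_comm, Finset.sum_comm (s := Finset.range r), ← Finset.sum_add_distrib]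
  refine Finset.sum_congr rfl fun k _ => ?_
  simp only [ite_and, Finset.sum_ite_eq, Finset.sum_ite_irrel, Finset.sum_const_zero,
    Finset.mem_range, PrecedesRow]
  split_ifs <;> simp_all <;> omega

lemma tabPsum_zero (pos : ℕ → Node) (l r : ℕ) : tabPsum pos 0 l r = 0 := by
  simp [tabPsum_eq_sum]

lemma tabPsum_succ (pos : ℕ → Node) (m l r : ℕ) :
    tabPsum pos (m + 1) l r
      = tabPsum pos m l r + if PrecedesRow (pos (m + 1)) l r then 1 else 0 := by
  simp only [tabPsum_eq_sum, Finset.sum_Icc_succ_top (Nat.le_add_left 1 m)]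

lemma tabPsum_actTab_of_mem_iff (pos : ℕ → Node) (σ : Equiv.Perm ℕ) {m : ℕ}
    (hσ : ∀ k, k ∈ Finset.Icc 1 m ↔ σ k ∈ Finset.Icc 1 m) (l r : ℕ) :
    tabPsum (actTab pos σ) m l r = tabPsum pos m l r := by
  simp only [tabPsum_eq_sum]
  exact Finset.sum_equiv σ hσ fun _ _ => rfl

lemma swapP_apply (c k : ℕ) :
    swapP c k = if k = c then c + 1 else if k = c + 1 then c else k := by
  simp [swapP, Equiv.swap_apply_def]

lemma tabPsum_actTab_swapP_of_ne (pos : ℕ → Node) {c m : ℕ} (hc : 1 ≤ c) (hm : m ≠ c)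
    (l r : ℕ) : tabPsum (actTab pos (swapP c)) m l r = tabPsum pos m l r :=
  tabPsum_actTab_of_mem_iff pos _ (fun k => by
    simp only [Finset.mem_Icc, swapP_apply]; split_ifs <;> omega) l r

lemma tabPsum_actTab_swapP_self (pos : ℕ → Node) {c : ℕ} (hc : 1 ≤ c) (l r : ℕ) :
    tabPsum (actTab pos (swapP c)) c l r
      = tabPsum pos (c - 1) l r + if PrecedesRow (pos (c + 1)) l r then 1 else 0 := by
  obtain ⟨m, rfl⟩ : ∃ m, c = m + 1 := ⟨c - 1, by omega⟩
  rw [tabPsum_succ, tabPsum_actTab_swapP_of_ne pos hc (by omega)]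
  simp [actTab, swapP_apply]

lemma precedesRow_of_nodeLex {x y : Node} (h : nodeLex x y) {l r : ℕ}
    (hy : PrecedesRow y l r) : PrecedesRow x l r := by
  unfold nodeLex at h
  unfold PrecedesRow at *
  omega

namespace TabDominates

variable {n c : ℕ} {T S : ℕ → Node}

lemma tabPsum_le (h : TabDominates n T S) {m : ℕ} (hm : m ≤ n) (l r : ℕ) :
    tabPsum S m l r ≤ tabPsum T m l r := by
  rcases Nat.eq_zero_or_pos m with rfl | hm0
  · simp [tabPsum_zero]
  · exact h m l r hm0 hm

lemma actTab_swapP_right (h : TabDominates n T S) (hc : 1 ≤ c)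
    (hS : nodeLex (S c) (S (c + 1))) : TabDominates n T (actTab S (swapP c)) := by
  intro m l r hm hmn
  rcases eq_or_ne m c with rfl | hne
  · have hSm := h m l r hm hmn
    rw [← Nat.sub_add_cancel hm, tabPsum_succ, Nat.sub_add_cancel hm] at hSm
    rw [tabPsum_actTab_swapP_self S hm]
    by_cases hy : PrecedesRow (S (m + 1)) l r
    · simp only [hy, precedesRow_of_nodeLex hS hy, if_true] at hSm ⊢
      exact hSm
    · simp only [hy, if_false] at hSm ⊢
      omega
  · rw [tabPsum_actTab_swapP_of_ne S hc hne]
    exact h m l r hm hmn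

/-- At `m = c`, if entry `c + 1` of `S` precedes row `(l, r)` but that of `T` does not, then
so does entry `c` of `S`, and the comparison at `m = c + 1` leaves the needed slack. -/
lemma actTab_swapP (h : TabDominates n T S) (hc : 1 ≤ c) (hcn : c < n)
    (hS : nodeLex (S c) (S (c + 1))) :
    TabDominates n (actTab T (swapP c)) (actTab S (swapP c)) := by
  intro m l r hm hmn
  rcases eq_or_ne m c with rfl | hne
  · rw [tabPsum_actTab_swapP_self S hm, tabPsum_actTab_swapP_self T hm]
    have hprev := h.tabPsum_le (m := m - 1) (by omega) l r
    by_cases hSy : PrecedesRow (S (m + 1)) l r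
    · have hSx := precedesRow_of_nodeLex hS hSy
      have hnext := h (m + 1) l r (by omega) hcn
      rw [tabPsum_succ S, tabPsum_succ T, ← Nat.sub_add_cancel hm, tabPsum_succ S,
        tabPsum_succ T, Nat.sub_add_cancel hm] at hnext
      simp only [hSy, hSx, if_true] at hnext ⊢
      split_ifs at hnext ⊢ <;> omega
    · simp only [hSy, if_false]
      omega
  · rw [tabPsum_actTab_swapP_of_ne S hc hne, tabPsum_actTab_swapP_of_ne T hc hne]
    exact h m l r hm hmn

end TabDominates

section Length

variable {n c : ℕ} {σ : Equiv.Perm ℕ}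

def inversions (n : ℕ) (σ : Equiv.Perm ℕ) : Finset (ℕ × ℕ) :=
  ((Finset.Icc 1 n) ×ˢ (Finset.Icc 1 n)).filter fun p => p.1 < p.2 ∧ σ p.2 < σ p.1

lemma permLength_eq_card_inversions : permLength n σ = (inversions n σ).card := rfl

lemma swapP_mul_self (c : ℕ) : swapP c * swapP c = 1 := Equiv.swap_mul_self c (c + 1)

lemma mem_inversions_mul_swapP_erase_iff (hc : 1 ≤ c) (hcn : c < n) (p : ℕ × ℕ) :
    p ∈ (inversions n (σ * swapP c)).erase (c, c + 1) ↔
      (swapP c p.1, swapP c p.2) ∈ (inversions n σ).erase (c, c + 1) := by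
  obtain ⟨a, b⟩ := p
  simp only [inversions, Finset.mem_erase, Finset.mem_filter, Finset.mem_product,
    Finset.mem_Icc, ne_eq, Prod.ext_iff]
  rw [Equiv.Perm.mul_apply, Equiv.Perm.mul_apply, swapP_apply c a, swapP_apply c b]
  split_ifs <;> omega

lemma pair_mem_inversions_iff (hc : 1 ≤ c) (hcn : c < n) :
    (c, c + 1) ∈ inversions n σ ↔ σ (c + 1) < σ c := by
  simp only [inversions, Finset.mem_filter, Finset.mem_product, Finset.mem_Icc]
  omega

lemma permLength_mul_swapP_of_lt (hc : 1 ≤ c) (hcn : c < n) (h : σ c < σ (c + 1)) :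
    permLength n (σ * swapP c) = permLength n σ + 1 := by
  have hmem : (c, c + 1) ∈ inversions n (σ * swapP c) :=
    (pair_mem_inversions_iff hc hcn).2 (by simpa [swapP_apply] using h)
  have hnot : (c, c + 1) ∉ inversions n σ := fun hm =>
    lt_asymm h ((pair_mem_inversions_iff hc hcn).1 hm)
  rw [permLength_eq_card_inversions, permLength_eq_card_inversions,
    ← Finset.card_erase_add_one hmem,
    Finset.card_equiv ((swapP c).prodCongr (swapP c))
      (mem_inversions_mul_swapP_erase_iff hc hcn),
    Finset.erase_eq_of_notMem hnot]

lemma permLength_mul_swapP_of_gt (hc : 1 ≤ c) (hcn : c < n) (h : σ (c + 1) < σ c) :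
    permLength n (σ * swapP c) + 1 = permLength n σ := by
  have := permLength_mul_swapP_of_lt (σ := σ * swapP c) hc hcn (by simpa [swapP_apply])
  rwa [mul_assoc, swapP_mul_self, mul_one, eq_comm] at this

lemma permLength_mul_swapP_le (hc : 1 ≤ c) (hcn : c < n) :
    permLength n (σ * swapP c) ≤ permLength n σ + 1 := by
  rcases lt_or_gt_of_ne (σ.injective.ne (Nat.ne_add_one c)) with h | h
  · exact (permLength_mul_swapP_of_lt hc hcn h).le
  · have := permLength_mul_swapP_of_gt hc hcn h
    omega

lemma lt_of_permLength_mul_swapP (hc : 1 ≤ c) (hcn : c < n)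
    (h : permLength n (σ * swapP c) = permLength n σ + 1) : σ c < σ (c + 1) := by
  refine (lt_or_gt_of_ne (σ.injective.ne (Nat.ne_add_one c))).resolve_right fun hgt => ?_
  have := permLength_mul_swapP_of_gt hc hcn hgt
  omega

end Length

lemma wordProd_cons (c : ℕ) (L : List ℕ) : wordProd (c :: L) = swapP c * wordProd L := by
  simp [wordProd]

lemma wordProd_append_singleton (L : List ℕ) (c : ℕ) :
    wordProd (L ++ [c]) = wordProd L * swapP c := by
  simp [wordProd]

lemma permLength_mul_wordProd_le {n : ℕ} (x : Equiv.Perm ℕ) {L : List ℕ}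
    (hL : ∀ c ∈ L, 1 ≤ c ∧ c < n) :
    permLength n (x * wordProd L) ≤ permLength n x + L.length := by
  induction L generalizing x with
  | nil => simp [wordProd]
  | cons c L ih =>
    obtain ⟨hc, hcn⟩ := hL c List.mem_cons_self
    have hstep := ih (x * swapP c) fun d hd => hL d (List.mem_cons_of_mem c hd)
    have hswap := permLength_mul_swapP_le (σ := x) hc hcn
    rw [wordProd_cons, ← mul_assoc, List.length_cons]
    omega

lemma lengthAdditive_of_append_singleton {n c : ℕ} (x : Equiv.Perm ℕ) {L : List ℕ}
    (hL : ∀ i ∈ L, 1 ≤ i ∧ i < n) (hc : 1 ≤ c) (hcn : c < n)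
    (h : permLength n (x * wordProd (L ++ [c])) = permLength n x + (L ++ [c]).length) :
    permLength n (x * wordProd L) = permLength n x + L.length ∧
      (x * wordProd L) c < (x * wordProd L) (c + 1) := by
  rw [wordProd_append_singleton, ← mul_assoc, List.length_append, List.length_singleton] at h
  have hprefix := permLength_mul_wordProd_le x hL
  have hswap := permLength_mul_swapP_le (σ := x * wordProd L) hc hcn
  refine ⟨by omega, lt_of_permLength_mul_swapP hc hcn (by omega)⟩

lemma FixesOutside.mul {x y : Equiv.Perm ℕ} {a b : ℕ} (hx : FixesOutside x a b)
    (hy : FixesOutside y a b) : FixesOutside (x * y) a b := fun k hk => by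
  rw [Equiv.Perm.mul_apply, hy k hk, hx k hk]

lemma FixesOutside.apply_mem {σ : Equiv.Perm ℕ} {a b : ℕ} (h : FixesOutside σ a b) {k : ℕ}
    (hk : a ≤ k ∧ k ≤ b) : a ≤ σ k ∧ σ k ≤ b := by
  by_contra hout
  have := σ.injective (h (σ k) (by omega))
  omega

lemma fixesOutside_wordProd {n : ℕ} {L : List ℕ} (hL : ∀ c ∈ L, 1 ≤ c ∧ c < n) :
    FixesOutside (wordProd L) 1 n := by
  induction L with
  | nil => exact fun k _ => rfl
  | cons c L ih =>
    obtain ⟨hc, hcn⟩ := hL c List.mem_cons_self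
    rw [wordProd_cons]
    refine FixesOutside.mul (fun k hk => ?_) (ih fun d hd => hL d (List.mem_cons_of_mem c hd))
    rw [swapP_apply]
    split_ifs <;> omega

lemma actTab_mul (pos : ℕ → Node) (x y : Equiv.Perm ℕ) :
    actTab pos (x * y) = actTab (actTab pos x) y := rfl

lemma nodeLex_actTab_of_lt {ℓ n : ℕ} {mu : Multicomp ℓ n} {tm s : ℕ → Node}
    (htm : IsRowReading mu tm) {ds y : Equiv.Perm ℕ} (hds : IsDPerm n tm s ds)
    (hy : FixesOutside y 1 n) {j k : ℕ} (hj : 1 ≤ j ∧ j ≤ n) (hk : 1 ≤ k ∧ k ≤ n)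
    (hlt : (ds * y) j < (ds * y) k) : nodeLex (actTab s y j) (actTab s y k) := by
  have hdsy := hds.1.mul hy
  obtain ⟨hyj, hyj'⟩ := hy.apply_mem hj
  obtain ⟨hyk, hyk'⟩ := hy.apply_mem hk
  obtain ⟨hdj, hdj'⟩ := hdsy.apply_mem hj
  obtain ⟨hdk, hdk'⟩ := hdsy.apply_mem hk
  rw [actTab, actTab, hds.2 _ hyj hyj', hds.2 _ hyk hyk']
  exact (htm.2 _ _ hdj hdj' hdk hdk').mp hlt

theorem tabDominates_actTab_wordProd {ℓ n : ℕ} {mu : Multicomp ℓ n} {tm vh s : ℕ → Node}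
    (htm : IsRowReading mu tm) {ds : Equiv.Perm ℕ} (hds : IsDPerm n tm s ds)
    (hdom : TabDominates n vh s) {ww uw : List ℕ} (hsub : uw.Sublist ww)
    (hww : ∀ c ∈ ww, 1 ≤ c ∧ c < n)
    (hlen : permLength n (ds * wordProd ww) = permLength n ds + ww.length) :
    TabDominates n (actTab vh (wordProd uw)) (actTab s (wordProd ww)) := by
  induction ww using List.reverseRecOn generalizing uw with
  | nil =>
    rw [List.sublist_nil.mp hsub]
    exact hdom
  | append_singleton ww c ih =>
    obtain ⟨hc, hcn⟩ := hww c (by simp)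
    have hww' : ∀ i ∈ ww, 1 ≤ i ∧ i < n := fun i hi => hww i (by simp [hi])
    obtain ⟨hlen', hascent⟩ := lengthAdditive_of_append_singleton ds hww' hc hcn hlen
    have hnl := nodeLex_actTab_of_lt htm hds (fixesOutside_wordProd hww') ⟨hc, hcn.le⟩
      ⟨by omega, hcn⟩ hascent
    obtain ⟨u₁, u₂, rfl, hu₁, hu₂⟩ := List.sublist_append_iff.mp hsub
    have ih' := ih hu₁ hww' hlen'
    rw [wordProd_append_singleton, actTab_mul]
    rcases List.sublist_singleton.mp hu₂ with rfl | rfl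
    · rw [List.append_nil]
      exact ih'.actTab_swapP_right hc hnl
    · rw [wordProd_append_singleton, actTab_mul]
      exact ih'.actTab_swapP hc hcn hnl

theorem statement5_general {ℓ n : ℕ} (mu : Multicomp ℓ n)
    (tm vh s : ℕ → Node) (htm : IsRowReading mu tm)
    (ds : Equiv.Perm ℕ) (hds : IsDPerm n tm s ds)
    (u w : Equiv.Perm ℕ)
    (hbr : BruhatLE n u w)
    (hdom : TabDominates n vh s)
    (hlen : permLength n (ds * w) = permLength n ds + permLength n w) :
    TabDominates n (actTab vh u) (actTab s w) := by
  obtain ⟨ww, uw, ⟨hww, hwwlen⟩, rfl, hsub, -, rfl⟩ := hbr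
  exact tabDominates_actTab_wordProd htm hds hdom hsub hww (by rw [hlen, ← hwwlen])

/-- Murphy's lemma.  If `v̂` is row standard, `s` is standard,
`u ≤ w` in Bruhat order, `v̂ ⊵ s`, `v̂u` is row standard, `s ⊳ sw` and
`ℓ(d(s)w) = ℓ(d(s)) + ℓ(w)`, then `v̂u ⊵ sw`. -/
theorem statement5 {ℓ n : ℕ} (mu : Multicomp ℓ n) (hm : mu.IsMultipartition)
    (tm vh s : ℕ → Node) (htm : IsRowReading mu tm)
    (hvh : RowStandard mu vh) (hs : StandardTab mu s)
    (ds : Equiv.Perm ℕ) (hds : IsDPerm n tm s ds)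
    (u w : Equiv.Perm ℕ) (hu : FixesOutside u 1 n) (hw : FixesOutside w 1 n)
    (hbr : BruhatLE n u w)
    (hdom : TabDominates n vh s)
    (hvu : RowStandard mu (actTab vh u))
    (hsw1 : TabDominates n s (actTab s w))
    (hsw2 : ∃ k, 1 ≤ k ∧ k ≤ n ∧ actTab s w k ≠ s k)
    (hlen : permLength n (ds * w) = permLength n ds + permLength n w) :
    TabDominates n (actTab vh u) (actTab s w) :=
  statement5_general mu tm vh s htm ds hds u w hbr hdom hlen

end SpechtInduction
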